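/- arXiv:1606.01026 — 2 statements merged into one kernel-verified Lean document; each statement's English description precedes it below -/
import Mathlib

section
/- Every idempotent element of the gossip monoid G_n is symmetric: if A is a product of call matrices and A² = A, then Aᵀ = A. -/
namespace Gossip

variable {n : ℕ}

/-- Boolean matrix multiplication over the semiring ({0,1}, max, min). -/
def bmul (A B : Matrix (Fin n) (Fin n) Bool) : Matrix (Fin n) (Fin n) Bool :=
  fun i j => decide (∃ k, A i k = true ∧ B k j = true)

/-- The identity boolean matrix. -/
def idm : Matrix (Fin n) (Fin n) Bool := fun a b => decide (a = b)

/-- The call matrix C[i,j]. -/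
def call (i j : Fin n) : Matrix (Fin n) (Fin n) Bool :=
  fun a b => decide (a = b ∨ (a = i ∧ b = j) ∨ (a = j ∧ b = i))

/-- Product of a list of boolean matrices (empty product is the identity). -/
def prodList : List (Matrix (Fin n) (Fin n) Bool) → Matrix (Fin n) (Fin n) Bool
  | [] => idm
  | M :: L => bmul M (prodList L)

/-- Membership in the gossip monoid `G_n`: a product of call matrices. -/
def InGossip (A : Matrix (Fin n) (Fin n) Bool) : Prop :=
  ∃ L : List (Fin n × Fin n), (∀ p ∈ L, p.1 ≠ p.2) ∧
    A = prodList (L.map fun p => call p.1 p.2)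

def BLe (A B : Matrix (Fin n) (Fin n) Bool) : Prop :=
  ∀ i j, A i j = true → B i j = true

lemma BLe.refl (A : Matrix (Fin n) (Fin n) Bool) : BLe A A := fun _ _ h => h

lemma BLe.trans {A B C : Matrix (Fin n) (Fin n) Bool} (hAB : BLe A B) (hBC : BLe B C) :
    BLe A C :=
  fun i j h => hBC i j (hAB i j h)

lemma BLe.antisymm {A B : Matrix (Fin n) (Fin n) Bool} (hAB : BLe A B) (hBA : BLe B A) :
    A = B :=
  funext fun i => funext fun j => Bool.eq_iff_iff.mpr ⟨hAB i j, hBA i j⟩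

lemma BLe.transpose {A B : Matrix (Fin n) (Fin n) Bool} (h : BLe A B) :
    BLe A.transpose B.transpose :=
  fun i j => h j i

lemma transpose_eq_self_of_bLe {A : Matrix (Fin n) (Fin n) Bool} (h : BLe A.transpose A) :
    A.transpose = A :=
  h.antisymm (by simpa using h.transpose)

lemma bmul_apply_eq_true {A B : Matrix (Fin n) (Fin n) Bool} {i j : Fin n} :
    bmul A B i j = true ↔ ∃ k, A i k = true ∧ B k j = true :=
  decide_eq_true_iff

lemma bmul_mono {A A' B B' : Matrix (Fin n) (Fin n) Bool}
    (hA : BLe A A') (hB : BLe B B') : BLe (bmul A B) (bmul A' B') := by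
  intro i j h
  rw [bmul_apply_eq_true] at h ⊢
  obtain ⟨k, hik, hkj⟩ := h
  exact ⟨k, hA _ _ hik, hB _ _ hkj⟩

lemma idm_bmul (A : Matrix (Fin n) (Fin n) Bool) : bmul idm A = A := by
  funext i j
  simp [bmul, idm]

lemma bmul_idm (A : Matrix (Fin n) (Fin n) Bool) : bmul A idm = A := by
  funext i j
  simp [bmul, idm]

lemma bmul_assoc (A B C : Matrix (Fin n) (Fin n) Bool) :
    bmul (bmul A B) C = bmul A (bmul B C) := by
  funext i j
  rw [Bool.eq_iff_iff]
  simp only [bmul_apply_eq_true]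
  exact ⟨fun ⟨k, ⟨m, h1, h2⟩, h3⟩ => ⟨m, h1, k, h2, h3⟩,
    fun ⟨m, h1, k, h2, h3⟩ => ⟨k, ⟨m, h1, h2⟩, h3⟩⟩

lemma transpose_bmul (A B : Matrix (Fin n) (Fin n) Bool) :
    (bmul A B).transpose = bmul B.transpose A.transpose := by
  funext i j
  rw [Bool.eq_iff_iff]
  simp only [Matrix.transpose_apply, bmul_apply_eq_true]
  exact ⟨fun ⟨k, h1, h2⟩ => ⟨k, h2, h1⟩, fun ⟨k, h1, h2⟩ => ⟨k, h2, h1⟩⟩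

lemma transpose_idm : (idm : Matrix (Fin n) (Fin n) Bool).transpose = idm := by
  funext i j
  simp [idm, eq_comm]

lemma transpose_call (i j : Fin n) : (call i j).transpose = call i j := by
  funext a b
  simp only [call, Matrix.transpose_apply, decide_eq_decide]
  tauto

lemma idm_bLe_call (i j : Fin n) : BLe idm (call i j) := by
  intro a b h
  simp_all [idm, call]

lemma bLe_bmul_right {B : Matrix (Fin n) (Fin n) Bool} (hB : BLe idm B)
    (A : Matrix (Fin n) (Fin n) Bool) : BLe A (bmul A B) := by
  simpa only [bmul_idm] using bmul_mono (BLe.refl A) hB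

lemma bLe_bmul_left {A : Matrix (Fin n) (Fin n) Bool} (hA : BLe idm A)
    (B : Matrix (Fin n) (Fin n) Bool) : BLe B (bmul A B) := by
  simpa only [idm_bmul] using bmul_mono hA (BLe.refl B)

lemma prodList_append (L₁ L₂ : List (Matrix (Fin n) (Fin n) Bool)) :
    prodList (L₁ ++ L₂) = bmul (prodList L₁) (prodList L₂) := by
  induction L₁ with
  | nil => simp [prodList, idm_bmul]
  | cons M L ih => simp [prodList, ih, bmul_assoc]

lemma transpose_prodList {L : List (Matrix (Fin n) (Fin n) Bool)}
    (h : ∀ M ∈ L, M.transpose = M) : (prodList L).transpose = prodList L.reverse := by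
  induction L with
  | nil => exact transpose_idm
  | cons M L ih =>
    rw [List.forall_mem_cons] at h
    rw [prodList, transpose_bmul, ih h.2, h.1, List.reverse_cons, prodList_append, prodList,
      prodList, bmul_idm]

lemma idm_bLe_prodList {L : List (Matrix (Fin n) (Fin n) Bool)}
    (h : ∀ M ∈ L, BLe idm M) : BLe idm (prodList L) := by
  induction L with
  | nil => exact BLe.refl idm
  | cons M L ih =>
    rw [List.forall_mem_cons] at h
    exact h.1.trans (bLe_bmul_right (ih h.2) M)

lemma bLe_prodList_of_mem {L : List (Matrix (Fin n) (Fin n) Bool)}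
    (h : ∀ M ∈ L, BLe idm M) {M : Matrix (Fin n) (Fin n) Bool} (hM : M ∈ L) :
    BLe M (prodList L) := by
  induction L with
  | nil => cases hM
  | cons N L ih =>
    rw [List.forall_mem_cons] at h
    rcases List.mem_cons.mp hM with rfl | hM
    · exact bLe_bmul_right (idm_bLe_prodList h.2) M
    · exact (ih h.2 hM).trans (bLe_bmul_left h.1 _)

lemma prodList_bLe_of_idempotent {A : Matrix (Fin n) (Fin n) Bool}
    (hI : BLe idm A) (hidem : bmul A A = A) {L : List (Matrix (Fin n) (Fin n) Bool)}
    (h : ∀ M ∈ L, BLe M A) : BLe (prodList L) A := by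
  induction L with
  | nil => exact hI
  | cons M L ih =>
    rw [List.forall_mem_cons] at h
    simpa only [prodList, hidem] using bmul_mono h.1 (ih h.2)

/-- Every factor `M ≥ I` lies below the product `A`, so the reversed product `Aᵀ` lies below
`A^k = A`; transposing gives the reverse inequality. -/
lemma transpose_prodList_eq_self_of_idempotent {L : List (Matrix (Fin n) (Fin n) Bool)}
    (hsymm : ∀ M ∈ L, M.transpose = M) (hI : ∀ M ∈ L, BLe idm M)
    (hidem : bmul (prodList L) (prodList L) = prodList L) :
    (prodList L).transpose = prodList L := by
  refine transpose_eq_self_of_bLe ?_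
  rw [transpose_prodList hsymm]
  exact prodList_bLe_of_idempotent (idm_bLe_prodList hI) hidem
    fun M hM => bLe_prodList_of_mem hI (List.mem_reverse.mp hM)

theorem stmt_11 (A : Matrix (Fin n) (Fin n) Bool) (hA : InGossip A)
    (hidem : bmul A A = A) : A.transpose = A := by
  obtain ⟨L, -, rfl⟩ := hA
  refine transpose_prodList_eq_self_of_idempotent ?_ ?_ hidem
  · simp only [List.forall_mem_map, transpose_call, implies_true]
  · simp only [List.forall_mem_map, idm_bLe_call, implies_true]
end Gossip
end

section
/- Green's relation J is trivial on the gossip monoid G_n: if A, B ∈ G_n and there exist U, V, X, Y ∈ G_n with A = UBV and B = XAY, then A = B. -/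
namespace Gossip

variable {n : ℕ}

/-!
Every element of `G_n` has a true diagonal, because every call matrix does. Multiplying a
boolean matrix on either side by a matrix with true diagonal can only switch entries on, so
`A = UBV` gives `B ≤ A` and `B = XAY` gives `A ≤ B` entrywise.
-/

theorem prodList_apply_self {L : List (Matrix (Fin n) (Fin n) Bool)}
    (h : ∀ M ∈ L, ∀ i, M i i = true) (i : Fin n) : prodList L i i = true := by
  induction L with
  | nil => simp [prodList, idm]
  | cons M L ih =>
    simp only [prodList, bmul, decide_eq_true_eq]
    exact ⟨i, h M List.mem_cons_self i, ih fun N hN => h N (List.mem_cons_of_mem _ hN)⟩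

theorem call_apply_self (i j a : Fin n) : call i j a a = true := by
  simp [call]

theorem InGossip.apply_self {M : Matrix (Fin n) (Fin n) Bool} (h : InGossip M) (i : Fin n) :
    M i i = true := by
  obtain ⟨L, -, rfl⟩ := h
  refine prodList_apply_self (fun N hN => ?_) i
  obtain ⟨p, -, rfl⟩ := List.mem_map.mp hN
  exact call_apply_self p.1 p.2

theorem bmul_bmul_apply_of_apply {U B V : Matrix (Fin n) (Fin n) Bool}
    (hU : ∀ i, U i i = true) (hV : ∀ i, V i i = true) {i j : Fin n}
    (hB : B i j = true) : bmul U (bmul B V) i j = true :=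
  decide_eq_true ⟨i, hU i, decide_eq_true ⟨j, hB, hV j⟩⟩

theorem stmt_19_general (A B U V X Y : Matrix (Fin n) (Fin n) Bool)
    (hU : InGossip U) (hV : InGossip V)
    (hX : InGossip X) (hY : InGossip Y)
    (h1 : A = bmul U (bmul B V)) (h2 : B = bmul X (bmul A Y)) :
    A = B := by
  funext i j
  refine Bool.eq_iff_iff.mpr ⟨fun hA => ?_, fun hB => ?_⟩
  · rw [h2]
    exact bmul_bmul_apply_of_apply hX.apply_self hY.apply_self hA
  · rw [h1]
    exact bmul_bmul_apply_of_apply hU.apply_self hV.apply_self hB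

theorem stmt_19 (A B U V X Y : Matrix (Fin n) (Fin n) Bool)
    (hA : InGossip A) (hB : InGossip B) (hU : InGossip U) (hV : InGossip V)
    (hX : InGossip X) (hY : InGossip Y)
    (h1 : A = bmul U (bmul B V)) (h2 : B = bmul X (bmul A Y)) :
    A = B :=
  stmt_19_general A B U V X Y hU hV hX hY h1 h2

end Gossip
end
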